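/- arXiv:1403.4870 — 4 statements merged into one kernel-verified Lean document; each statement's English description precedes it below -/
import Mathlib

section
/- In a bi-ordered group, if an element g commutes with hⁿ for some nonzero integer n, then g commutes with h. -/
/-!
Conjugation by `g` maps `h` to `k = g h g⁻¹` with `kⁿ = g hⁿ g⁻¹ = hⁿ`. In a bi-ordered group
`a < b` gives `aᵐ < bᵐ` for `m > 0`, so `m`-th powers, and then all nonzero integer powers, are
injective; hence `k = h`.
-/

section

variable {M : Type*} [Monoid M] {r : M → M → Prop}

theorem rel_pow_pow_of_rel [IsTrans M r] (hleft : ∀ f a b : M, r a b → r (f * a) (f * b))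
    (hright : ∀ f a b : M, r a b → r (a * f) (b * f)) {a b : M} (hab : r a b) :
    ∀ {m : ℕ}, m ≠ 0 → r (a ^ m) (b ^ m)
  | 1, _ => by simpa using hab
  | m + 2, _ => by
    have ih := rel_pow_pow_of_rel hleft hright hab m.succ_ne_zero
    rw [pow_succ' a, pow_succ' b]
    exact _root_.trans (hleft a _ _ ih) (hright _ _ _ hab)

theorem pow_left_injective_of_rel [IsStrictTotalOrder M r]
    (hleft : ∀ f a b : M, r a b → r (f * a) (f * b))
    (hright : ∀ f a b : M, r a b → r (a * f) (b * f)) {m : ℕ} (hm : m ≠ 0) {a b : M}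
    (h : a ^ m = b ^ m) : a = b := by
  rcases trichotomous_of r a b with hab | hab | hab
  · exact absurd (h ▸ rel_pow_pow_of_rel hleft hright hab hm) (irrefl _)
  · exact hab
  · exact absurd (h ▸ rel_pow_pow_of_rel hleft hright hab hm) (irrefl _)

end

theorem zpow_left_injective_of_rel {G : Type*} [Group G] {r : G → G → Prop}
    [IsStrictTotalOrder G r] (hleft : ∀ f a b : G, r a b → r (f * a) (f * b))
    (hright : ∀ f a b : G, r a b → r (a * f) (b * f)) {n : ℤ} (hn : n ≠ 0) {a b : G}
    (h : a ^ n = b ^ n) : a = b := by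
  have hm : n.natAbs ≠ 0 := Int.natAbs_ne_zero.mpr hn
  refine pow_left_injective_of_rel hleft hright hm ?_
  rcases Int.natAbs_eq n with hpos | hneg
  · rwa [hpos, zpow_natCast, zpow_natCast] at h
  · rwa [hneg, zpow_neg, zpow_neg, inv_inj, zpow_natCast, zpow_natCast] at h

/-- In a bi-ordered group, if `g` commutes with a nonzero power `hⁿ` of `h`,
then `g` commutes with `h`. -/
theorem biorder_commute_of_commute_pow (G : Type*) [Group G] (r : G → G → Prop)
    (hsto : IsStrictTotalOrder G r)
    (hleft : ∀ f g h : G, r g h → r (f * g) (f * h))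
    (hright : ∀ f g h : G, r g h → r (g * f) (h * f))
    (g h : G) (n : ℤ) (hn : n ≠ 0) (hcomm : g * h ^ n = h ^ n * g) :
    g * h = h * g := by
  have hconj : (g * h * g⁻¹) ^ n = h ^ n := by
    rw [conj_zpow, hcomm, mul_inv_cancel_right]
  have hfix : g * h * g⁻¹ = h := zpow_left_injective_of_rel hleft hright hn hconj
  exact mul_inv_eq_iff_eq_mul.mp hfix
end

section
/- Any group that acts effectively (faithfully) on the real line by orientation-preserving (i.e., strictly increasing) homeomorphisms is left-orderable. -/
/-!
Well-order the underlying set of the line and compare `g, h ∈ G` by comparing `φ g x` with `φ h x`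
at the first point `x` of this well-order where they differ. Faithfulness makes this a strict total
order on `G`, and it is left-invariant because an increasing `φ f` preserves both the equalities
before `x` and the strict inequality at `x`.
-/

open Function

theorem StrictMono.toLex_comp_lt_toLex_comp {ι α β : Type*} [LT ι] [Preorder α] [Preorder β]
    {f : α → β} (hf : StrictMono f) {x y : ι → α} (h : toLex x < toLex y) :
    toLex (f ∘ x) < toLex (f ∘ y) := by
  obtain ⟨i, heq, hlt⟩ := h
  exact ⟨i, fun j hj => congrArg f (heq j hj), hf hlt⟩

theorem exists_leftInvariant_strictTotalOrder_of_faithful_strictMono_action (G α : Type*)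
    [Group G] [LinearOrder α] (φ : G →* Equiv.Perm α) (hmono : ∀ g : G, StrictMono (φ g))
    (hfaithful : Injective φ) :
    ∃ r : G → G → Prop, IsStrictTotalOrder G r ∧ ∀ f g h : G, r g h → r (f * g) (f * h) := by
  -- a well-ordered copy of `α`
  obtain ⟨e⟩ : Nonempty ((Cardinal.mk α).ord.ToType ≃ α) :=
    Cardinal.eq.1 (Cardinal.mk_ord_toType _)
  let F : G → Lex ((Cardinal.mk α).ord.ToType → α) := fun g => toLex (φ g ∘ e)
  have hF : Injective F := fun g h hgh =>
    hfaithful <| Equiv.coe_fn_injective <| e.surjective.injective_comp_right hgh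
  refine ⟨(· < ·) on F, hF.isStrictTotalOrder_onFun (r := (· < ·)), fun f g h hgh => ?_⟩
  change toLex (φ (f * g) ∘ e) < toLex (φ (f * h) ∘ e)
  simp only [map_mul, Equiv.Perm.coe_mul, comp_assoc]
  exact (hmono f).toLex_comp_lt_toLex_comp hgh

/-- A group acting effectively on the real line by orientation-preserving
(strictly increasing) homeomorphisms is left-orderable. -/
theorem leftOrderable_of_faithful_action_on_real_line (G : Type*) [Group G]
    (φ : G →* Equiv.Perm ℝ)
    (hmono : ∀ g : G, StrictMono (φ g))
    (hfaithful : Function.Injective φ) :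
    ∃ r : G → G → Prop, IsStrictTotalOrder G r ∧ ∀ f g h : G, r g h → r (f * g) (f * h) :=
  exists_leftInvariant_strictTotalOrder_of_faithful_strictMono_action G ℝ φ hmono hfaithful
end

section
/- For n ≥ 3, the braid group Bₙ is not bi-orderable. -/
/-- The braid relations on `n` generators `σ₀, …, σ_{n-1}` (presenting the
braid group `B_{n+1}`): `σᵢσⱼ = σⱼσᵢ` for `|i - j| > 1` and
`σᵢσⱼσᵢ = σⱼσᵢσⱼ` for `|i - j| = 1`. -/
def braidRels (n : ℕ) : Set (FreeGroup (Fin n)) :=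
  {r | ∃ i j : Fin n, ((i : ℕ) + 1 < j ∨ (j : ℕ) + 1 < i) ∧
      r = FreeGroup.of i * FreeGroup.of j * (FreeGroup.of j * FreeGroup.of i)⁻¹} ∪
  {r | ∃ i j : Fin n, ((j : ℕ) = i + 1 ∨ (i : ℕ) = j + 1) ∧
      r = FreeGroup.of i * FreeGroup.of j * FreeGroup.of i *
        (FreeGroup.of j * FreeGroup.of i * FreeGroup.of j)⁻¹}

/-- The braid group on `n` strands, with generators `σ₁, …, σ_{n-1}`. -/
abbrev BraidGroup (n : ℕ) : Type := PresentedGroup (braidRels (n - 1))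

def BiOrderable (G : Type*) [Group G] : Prop :=
  ∃ r : G → G → Prop, IsStrictTotalOrder G r ∧
    (∀ f g h : G, r g h → r (f * g) (f * h)) ∧
    (∀ f g h : G, r g h → r (g * f) (h * f))

/-!
In a bi-ordered group `x ↦ x ^ k` is strictly monotone for `k ≠ 0`, so `k`-th roots are
unique. If `a b a = b a b` then `(a b)³ = (a b a)(b a b) = (b a b)(a b a) = (b a)³`; uniqueness
of cube roots gives `a b = b a`, and then the braid relation collapses to `a = b`. The
generators `σ₁, σ₂` of `Bₙ` satisfy the braid relation but are distinct, since they map to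
different transpositions.
-/

open Equiv

theorem BiOrderable.isMulTorsionFree {G : Type*} [Group G] (hG : BiOrderable G) :
    IsMulTorsionFree G := by
  classical
  obtain ⟨r, hr, hleft, hright⟩ := hG
  let : LinearOrder G := linearOrderOfSTO r
  have : MulLeftStrictMono G := ⟨fun f _ _ h => hleft f _ _ h⟩
  have : MulRightStrictMono G := ⟨fun f _ _ h => hright f _ _ h⟩
  infer_instance

theorem eq_of_mul_mul_eq_mul_mul {G : Type*} [Group G] [IsMulTorsionFree G] {a b : G}
    (h : a * b * a = b * a * b) : a = b := by
  have hcube : (a * b) ^ 3 = (b * a) ^ 3 :=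
    calc (a * b) ^ 3 = (a * b * a) * (b * a * b) := by
          simp only [pow_succ, pow_zero, one_mul, mul_assoc]
      _ = (b * a * b) * (a * b * a) := by rw [h]
      _ = (b * a) ^ 3 := by simp only [pow_succ, pow_zero, one_mul, mul_assoc]
  have hcomm : a * b = b * a := pow_left_injective three_ne_zero hcube
  have : a * (a * b) = a * b * b :=
    calc a * (a * b) = a * b * a := by rw [mul_assoc, hcomm]
      _ = b * a * b := h
      _ = a * b * b := by rw [← hcomm]
  exact mul_right_cancel (mul_left_cancel (this.trans (mul_assoc a b b)))

theorem Equiv.swap_mul_swap_mul_swap_eq_swap_mul_swap_mul_swap {α : Type*} [DecidableEq α]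
    {a b c : α} (hab : a ≠ b) (hac : a ≠ c) (hbc : b ≠ c) :
    swap a b * swap b c * swap a b = swap b c * swap a b * swap b c := by
  rw [swap_mul_swap_mul_swap hab hac, swap_comm a b, swap_comm b c,
    swap_mul_swap_mul_swap hbc.symm hac.symm, swap_comm]

theorem lift_swap_succ_eq_one_of_mem_braidRels (m : ℕ) :
    ∀ r ∈ braidRels m, FreeGroup.lift (fun i : Fin m => swap (i : ℕ) (i + 1)) r = 1 := by
  rintro r (⟨i, j, hfar, rfl⟩ | ⟨i, j, hnear, rfl⟩) <;>
    simp only [map_mul, map_inv, FreeGroup.lift_apply_of, mul_inv_eq_one]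
  · exact (Perm.disjoint_swap_swap (by simp; omega)).commute
  · rcases hnear with hj | hi
    · rw [hj]
      exact swap_mul_swap_mul_swap_eq_swap_mul_swap_mul_swap (by omega) (by omega) (by omega)
    · rw [hi]
      exact (swap_mul_swap_mul_swap_eq_swap_mul_swap_mul_swap (by omega) (by omega)
        (by omega)).symm

namespace BraidGroup

def toPerm (n : ℕ) : BraidGroup n →* Perm ℕ :=
  PresentedGroup.toGroup (lift_swap_succ_eq_one_of_mem_braidRels (n - 1))

theorem of_mul_of_mul_of {n : ℕ} (i j : Fin (n - 1)) (hij : (j : ℕ) = i + 1) :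
    (PresentedGroup.of i * PresentedGroup.of j * PresentedGroup.of i : BraidGroup n) =
      PresentedGroup.of j * PresentedGroup.of i * PresentedGroup.of j :=
  PresentedGroup.mk_eq_mk_of_mul_inv_mem (Or.inr ⟨i, j, Or.inl hij, rfl⟩)

theorem of_ne_of {n : ℕ} (i j : Fin (n - 1)) (hij : i ≠ j) :
    (PresentedGroup.of i : BraidGroup n) ≠ PresentedGroup.of j := by
  intro h
  have hswap : swap (i : ℕ) (i + 1) = swap (j : ℕ) (j + 1) := by
    simpa only [toPerm, PresentedGroup.toGroup.of] using congrArg (toPerm n) h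
  have hi := congrArg (· (i : ℕ)) hswap
  simp only [swap_apply_left, swap_apply_def] at hi
  have := Fin.val_ne_of_ne hij
  split_ifs at hi <;> omega

end BraidGroup

/-- For `n ≥ 3`, the braid group `Bₙ` is not bi-orderable. -/
theorem braidGroup_not_biorderable (n : ℕ) (hn : 3 ≤ n) :
    ¬ BiOrderable (BraidGroup n) := by
  intro hG
  have := hG.isMulTorsionFree
  let i : Fin (n - 1) := ⟨0, by omega⟩
  let j : Fin (n - 1) := ⟨1, by omega⟩
  exact BraidGroup.of_ne_of i j (by simp [i, j, Fin.ext_iff])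
    (eq_of_mul_mul_eq_mul_mul (BraidGroup.of_mul_of_mul_of i j rfl))
end

section
/- The fundamental group of the Weeks manifold, ⟨a, b | babab = ab⁻²a, ababa = ba⁻²b⟩, is not left-orderable. -/
/-- The fundamental group of the Weeks manifold,
`⟨a, b | babab = ab⁻²a, ababa = ba⁻²b⟩`, with `a = of true`, `b = of false`. -/
abbrev WeeksGroup : Type := PresentedGroup
  ({(FreeGroup.of false * FreeGroup.of true * FreeGroup.of false * FreeGroup.of true *
      FreeGroup.of false) *
      (FreeGroup.of true * (FreeGroup.of false)⁻¹ * (FreeGroup.of false)⁻¹ *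
        FreeGroup.of true)⁻¹,
    (FreeGroup.of true * FreeGroup.of false * FreeGroup.of true * FreeGroup.of false *
      FreeGroup.of true) *
      (FreeGroup.of false * (FreeGroup.of true)⁻¹ * (FreeGroup.of true)⁻¹ *
        FreeGroup.of false)⁻¹} : Set (FreeGroup Bool))

def LeftOrderable (G : Type*) [Group G] : Prop :=
  ∃ r : G → G → Prop, IsStrictTotalOrder G r ∧ ∀ f g h : G, r g h → r (f * g) (f * h)

/-!
Written as `(ab)² = b⁻¹ab⁻²a = ba⁻²ba⁻¹`, the relations are symmetric under swapping `a` and `b`.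
Suppose `1 < a` in a left-invariant order. If `b ≤ 1`, the first expression for `(ab)²` is `> 1`
and the second `< 1`. If `a ≤ b`, then `(ab)² > 1` while `(ab)² = (b⁻¹a)b⁻¹(b⁻¹a) < 1`; the case
`b ≤ a` is the same with `a` and `b` swapped. Reversing the order excludes `a < 1`, and `a ≠ 1`
since `a ↦ 1, b ↦ 0` respects the relations in `ℤ/5` (they read `2 = 2` and `3 = -2`).
-/

theorem LeftOrderable.exists_linearOrder_mulLeftMono {G : Type*} [Group G] (h : LeftOrderable G) :
    ∃ _ : LinearOrder G, MulLeftMono G := by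
  obtain ⟨r, hr, hmul⟩ := h
  classical
  let _ := linearOrderOfSTO r
  have : MulLeftStrictMono G := ⟨fun f _ _ h ↦ hmul f _ _ h⟩
  exact ⟨_, mulLeftMono_of_mulLeftStrictMono G⟩

structure WeeksRelations {G : Type*} [Group G] (a b : G) : Prop where
  bab : b * a * b * a * b = a * b⁻¹ * b⁻¹ * a
  aba : a * b * a * b * a = b * a⁻¹ * a⁻¹ * b

namespace WeeksRelations

variable {G : Type*} [Group G] {a b : G}

theorem symm (h : WeeksRelations a b) : WeeksRelations b a := ⟨h.aba, h.bab⟩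

theorem mul_sq_eq_inv_mul (h : WeeksRelations a b) : (a * b) ^ 2 = b⁻¹ * (a * b⁻¹ * b⁻¹ * a) := by
  rw [sq, ← h.bab]; group

theorem mul_sq_eq_mul_inv (h : WeeksRelations a b) : (a * b) ^ 2 = b * a⁻¹ * a⁻¹ * b * a⁻¹ := by
  rw [sq, ← h.aba]; group

variable [LinearOrder G] [MulLeftMono G]

theorem not_one_lt_of_le_one (h : WeeksRelations a b) (hb : b ≤ 1) : ¬ 1 < a := fun ha ↦ by
  have hb' : 1 ≤ b⁻¹ := Left.one_le_inv_iff.mpr hb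
  have ha' : a⁻¹ < 1 := Left.inv_lt_one_iff.mpr ha
  have hpos : 1 < (a * b) ^ 2 := by
    rw [h.mul_sq_eq_inv_mul]
    exact Left.one_lt_mul_of_le_of_lt hb' <| one_lt_mul_of_lt_of_le'
      (one_lt_mul_of_lt_of_le' (one_lt_mul_of_lt_of_le' ha hb') hb') ha.le
  have hneg : (a * b) ^ 2 < 1 := by
    rw [h.mul_sq_eq_mul_inv]
    exact mul_lt_one_of_lt_of_le (mul_lt_one_of_lt_of_le
      (mul_lt_one_of_lt_of_le (Left.mul_lt_one_of_le_of_lt hb ha') ha'.le) hb) ha'.le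
  exact hpos.not_gt hneg

theorem not_one_lt_of_le (h : WeeksRelations a b) (hab : a ≤ b) : ¬ 1 < a := fun ha ↦ by
  have hb : 1 < b := ha.trans_le hab
  have hba : b⁻¹ * a ≤ 1 := inv_mul_le_one_iff.mpr hab
  have hpos : 1 < (a * b) ^ 2 := by
    have hab₁ : 1 < a * b := Left.one_lt_mul ha hb
    rw [sq]
    exact Left.one_lt_mul hab₁ hab₁
  have hneg : (a * b) ^ 2 < 1 := by
    rw [h.mul_sq_eq_inv_mul, show b⁻¹ * (a * b⁻¹ * b⁻¹ * a) = b⁻¹ * a * b⁻¹ * (b⁻¹ * a) by group]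
    exact mul_lt_one_of_lt_of_le (Left.mul_lt_one_of_le_of_lt hba (Left.inv_lt_one_iff.mpr hb)) hba
  exact hpos.not_gt hneg

theorem not_one_lt (h : WeeksRelations a b) : ¬ 1 < a := fun ha ↦ by
  rcases le_total a b with hab | hba
  · exact h.not_one_lt_of_le hab ha
  rcases le_or_gt b 1 with hb | hb
  · exact h.not_one_lt_of_le_one hb ha
  · exact h.symm.not_one_lt_of_le hba hb

theorem eq_one (h : WeeksRelations a b) : a = 1 :=
  le_antisymm (not_lt.mp h.not_one_lt)
    (not_lt.mp (WeeksRelations.not_one_lt (G := Gᵒᵈ) h))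

end WeeksRelations

namespace WeeksGroup

open PresentedGroup

theorem weeksRelations : WeeksRelations (of true : WeeksGroup) (of false) where
  bab := mk_eq_mk_of_mul_inv_mem (Set.mem_insert _ _)
  aba := mk_eq_mk_of_mul_inv_mem (Set.mem_insert_of_mem _ rfl)

theorem of_true_ne_one : (of true : WeeksGroup) ≠ 1 := by
  let f : Bool → Multiplicative (ZMod 5) := fun x ↦ if x then Multiplicative.ofAdd 1 else 1
  intro h
  have := congrArg (toGroup (f := f) ?_) h
  · rw [toGroup.of, map_one] at this
    exact absurd this (by decide)
  · rintro r (rfl | rfl) <;> decide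

end WeeksGroup

/-- The fundamental group of the Weeks manifold is not left-orderable. -/
theorem weeksGroup_not_leftOrderable : ¬ LeftOrderable WeeksGroup := by
  intro h
  obtain ⟨_, _⟩ := h.exists_linearOrder_mulLeftMono
  exact WeeksGroup.of_true_ne_one WeeksGroup.weeksRelations.eq_one
end
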